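/- arXiv:1211.5752 — 4 statements merged into one kernel-verified Lean document; each statement's English description precedes it below -/
import Mathlib

section
/- Let n ≥ 1, let a_i^j : ℝⁿ → ℝ be smooth functions defining vector fields X_i = Σ_j a_i^j ∂/∂s_j, and let c_{ij}^k : ℝⁿ → ℝ satisfy [X_i,X_j] = Σ_k c_{ij}^k X_k componentwise. Set π_i(s,p) = Σ_j a_i^j(s) p_j. For smooth functions F, G : ℝⁿ × ℝⁿ → ℝ in the variables (s,π), define f(s,p) = F(s, π(s,p)) and g(s,p) = G(s, π(s,p)). Then the canonical Poisson bracket of f and g satisfies, at every point (s,p) with π = π(s,p): {f,g} = Σ_{i,j} a_j^i(s) [ (∂F/∂s_i)(∂G/∂π_j) − (∂F/∂π_j)(∂G/∂s_i) ] − Σ_{i,j,k} c_{ij}^k(s) π_k (∂F/∂π_i)(∂G/∂π_j), where all derivatives of F and G are evaluated at (s, π(s,p)). -/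
open scoped BigOperators

/-- Partial derivative of `f : ℝⁿ × ℝⁿ → ℝ` with respect to the `i`-th
variable of the first factor. -/
noncomputable def partialS {n : ℕ} (f : (Fin n → ℝ) × (Fin n → ℝ) → ℝ) (i : Fin n)
    (z : (Fin n → ℝ) × (Fin n → ℝ)) : ℝ :=
  fderiv ℝ f z (Pi.single i 1, 0)

/-- Partial derivative of `f : ℝⁿ × ℝⁿ → ℝ` with respect to the `i`-th
variable of the second factor. -/
noncomputable def partialP {n : ℕ} (f : (Fin n → ℝ) × (Fin n → ℝ) → ℝ) (i : Fin n)
    (z : (Fin n → ℝ) × (Fin n → ℝ)) : ℝ :=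
  fderiv ℝ f z (0, Pi.single i 1)

/-- The canonical Poisson bracket `{f,g} = Σ_i (∂f/∂s_i ∂g/∂p_i − ∂f/∂p_i ∂g/∂s_i)`. -/
noncomputable def poissonBracket {n : ℕ} (f g : (Fin n → ℝ) × (Fin n → ℝ) → ℝ)
    (z : (Fin n → ℝ) × (Fin n → ℝ)) : ℝ :=
  ∑ i : Fin n, (partialS f i z * partialP g i z - partialP f i z * partialS g i z)

section Aux

variable {n : ℕ}

lemma clm_eval_aux (L : ((Fin n → ℝ) × (Fin n → ℝ)) →L[ℝ] ℝ) (u v : Fin n → ℝ) :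
    L (u, v) = (∑ i, u i * L (Pi.single i 1, 0)) + ∑ i, v i * L (0, Pi.single i 1) := by
  have h : (u, v) = (∑ i, u i • ((Pi.single i 1 : Fin n → ℝ), (0 : Fin n → ℝ)))
      + ∑ i, v i • ((0 : Fin n → ℝ), (Pi.single i 1 : Fin n → ℝ)) := by
    apply Prod.ext <;>
      simp [Prod.fst_sum, Prod.snd_sum, Finset.sum_apply, Pi.single_apply, smul_eq_mul,
        Finset.sum_ite_eq', mul_comm] <;>
      funext j <;>
      simp [Finset.sum_apply, Pi.single_apply, Finset.sum_ite_eq']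
  rw [h, map_add, map_sum, map_sum]
  congr 1 <;> refine Finset.sum_congr rfl fun i _ => ?_ <;> rw [map_smul] <;> rfl

lemma pi_hasFDeriv_aux (a : Fin n → Fin n → (Fin n → ℝ) → ℝ) (ha : ∀ i j, ContDiff ℝ (⊤ : ℕ∞) (a i j))
    (k : Fin n) (z : (Fin n → ℝ) × (Fin n → ℝ)) :
    HasFDerivAt (fun z : (Fin n → ℝ) × (Fin n → ℝ) => ∑ j : Fin n, a k j z.1 * z.2 j)
      (∑ j : Fin n, (a k j z.1 • ((ContinuousLinearMap.proj j).comp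
          (ContinuousLinearMap.snd ℝ (Fin n → ℝ) (Fin n → ℝ)))
        + z.2 j • ((fderiv ℝ (a k j) z.1).comp
          (ContinuousLinearMap.fst ℝ (Fin n → ℝ) (Fin n → ℝ))))) z := by
  apply HasFDerivAt.fun_sum
  intro j _
  have h1 : HasFDerivAt (fun z : (Fin n → ℝ) × (Fin n → ℝ) => a k j z.1)
      ((fderiv ℝ (a k j) z.1).comp (ContinuousLinearMap.fst ℝ (Fin n → ℝ) (Fin n → ℝ))) z :=
    (((ha k j).differentiable (by simp) z.1).hasFDerivAt).comp z (hasFDerivAt_fst)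
  have h2 : HasFDerivAt (fun z : (Fin n → ℝ) × (Fin n → ℝ) => z.2 j)
      ((ContinuousLinearMap.proj j).comp (ContinuousLinearMap.snd ℝ (Fin n → ℝ) (Fin n → ℝ))) z :=
    ((ContinuousLinearMap.proj j).comp
      (ContinuousLinearMap.snd ℝ (Fin n → ℝ) (Fin n → ℝ))).hasFDerivAt
  exact h1.mul h2

lemma f_hasFDeriv_aux (a : Fin n → Fin n → (Fin n → ℝ) → ℝ) (ha : ∀ i j, ContDiff ℝ (⊤ : ℕ∞) (a i j))
    (π : Fin n → (Fin n → ℝ) × (Fin n → ℝ) → ℝ)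
    (hπ : ∀ i z, π i z = ∑ j : Fin n, a i j z.1 * z.2 j)
    (F : (Fin n → ℝ) × (Fin n → ℝ) → ℝ) (hF : ContDiff ℝ (⊤ : ℕ∞) F)
    (f : (Fin n → ℝ) × (Fin n → ℝ) → ℝ)
    (hf : ∀ z, f z = F (z.1, fun i => π i z))
    (z : (Fin n → ℝ) × (Fin n → ℝ)) :
    HasFDerivAt f
      ((fderiv ℝ F (z.1, fun k => π k z)).comp
        ((ContinuousLinearMap.fst ℝ (Fin n → ℝ) (Fin n → ℝ)).prod
          (ContinuousLinearMap.pi (fun k =>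
            ∑ j : Fin n, (a k j z.1 • ((ContinuousLinearMap.proj j).comp
                (ContinuousLinearMap.snd ℝ (Fin n → ℝ) (Fin n → ℝ)))
              + z.2 j • ((fderiv ℝ (a k j) z.1).comp
                (ContinuousLinearMap.fst ℝ (Fin n → ℝ) (Fin n → ℝ)))))))) z := by
  have hΦ : HasFDerivAt (fun z : (Fin n → ℝ) × (Fin n → ℝ) => (z.1, fun k => π k z))
      ((ContinuousLinearMap.fst ℝ (Fin n → ℝ) (Fin n → ℝ)).prod
        (ContinuousLinearMap.pi (fun k =>
          ∑ j : Fin n, (a k j z.1 • ((ContinuousLinearMap.proj j).comp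
              (ContinuousLinearMap.snd ℝ (Fin n → ℝ) (Fin n → ℝ)))
            + z.2 j • ((fderiv ℝ (a k j) z.1).comp
              (ContinuousLinearMap.fst ℝ (Fin n → ℝ) (Fin n → ℝ))))))) z := by
    refine HasFDerivAt.prodMk hasFDerivAt_fst (hasFDerivAt_pi.2 fun k => ?_)
    have := pi_hasFDeriv_aux a ha k z
    rw [show π k = fun z => ∑ j : Fin n, a k j z.1 * z.2 j from funext (hπ k)]
    exact this
  have hF' : HasFDerivAt F (fderiv ℝ F (z.1, fun k => π k z)) (z.1, fun k => π k z) :=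
    (hF.differentiable (by simp) _).hasFDerivAt
  have : f = fun z => F (z.1, fun i => π i z) := funext hf
  rw [this]
  exact hF'.comp z hΦ

lemma partials_f_aux (a : Fin n → Fin n → (Fin n → ℝ) → ℝ) (ha : ∀ i j, ContDiff ℝ (⊤ : ℕ∞) (a i j))
    (π : Fin n → (Fin n → ℝ) × (Fin n → ℝ) → ℝ)
    (hπ : ∀ i z, π i z = ∑ j : Fin n, a i j z.1 * z.2 j)
    (F : (Fin n → ℝ) × (Fin n → ℝ) → ℝ) (hF : ContDiff ℝ (⊤ : ℕ∞) F)
    (f : (Fin n → ℝ) × (Fin n → ℝ) → ℝ)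
    (hf : ∀ z, f z = F (z.1, fun i => π i z))
    (z : (Fin n → ℝ) × (Fin n → ℝ)) (i : Fin n) :
    partialS f i z = partialS F i (z.1, fun k => π k z)
        + ∑ k, (∑ m, z.2 m * fderiv ℝ (a k m) z.1 (Pi.single i 1))
            * partialP F k (z.1, fun k => π k z)
      ∧ partialP f i z = ∑ k, a k i z.1 * partialP F k (z.1, fun k => π k z) := by
  have hd := (f_hasFDeriv_aux a ha π hπ F hF f hf z).fderiv
  constructor
  · rw [partialS, hd]
    rw [ContinuousLinearMap.comp_apply]
    rw [show ((ContinuousLinearMap.fst ℝ (Fin n → ℝ) (Fin n → ℝ)).prod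
          (ContinuousLinearMap.pi (fun k =>
            ∑ j : Fin n, (a k j z.1 • ((ContinuousLinearMap.proj j).comp
                (ContinuousLinearMap.snd ℝ (Fin n → ℝ) (Fin n → ℝ)))
              + z.2 j • ((fderiv ℝ (a k j) z.1).comp
                (ContinuousLinearMap.fst ℝ (Fin n → ℝ) (Fin n → ℝ)))))))
          ((Pi.single i 1 : Fin n → ℝ), (0 : Fin n → ℝ))
        = ((Pi.single i 1 : Fin n → ℝ),
            fun k => ∑ m, z.2 m * fderiv ℝ (a k m) z.1 (Pi.single i 1)) by
      apply Prod.ext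
      · simp
      · funext k
        simp [ContinuousLinearMap.sum_apply, smul_eq_mul]]
    rw [clm_eval_aux]
    congr 1
    simp [Pi.single_apply, Finset.sum_ite_eq', partialS]
  · rw [partialP, hd]
    rw [ContinuousLinearMap.comp_apply]
    rw [show ((ContinuousLinearMap.fst ℝ (Fin n → ℝ) (Fin n → ℝ)).prod
          (ContinuousLinearMap.pi (fun k =>
            ∑ j : Fin n, (a k j z.1 • ((ContinuousLinearMap.proj j).comp
                (ContinuousLinearMap.snd ℝ (Fin n → ℝ) (Fin n → ℝ)))
              + z.2 j • ((fderiv ℝ (a k j) z.1).comp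
                (ContinuousLinearMap.fst ℝ (Fin n → ℝ) (Fin n → ℝ)))))))
          ((0 : Fin n → ℝ), (Pi.single i 1 : Fin n → ℝ))
        = ((0 : Fin n → ℝ), fun k => a k i z.1) by
      apply Prod.ext
      · simp
      · funext k
        simp [ContinuousLinearMap.sum_apply, smul_eq_mul, Pi.single_apply,
          Finset.sum_ite_eq', mul_comm]]
    rw [clm_eval_aux]
    simp [partialP]

lemma alg_i_aux (i : Fin n) (FSi GSi : ℝ) (FP GP : Fin n → ℝ) (A B : Fin n → Fin n → ℝ) :
    (FSi + ∑ k, B k i * FP k) * (∑ l, A l i * GP l)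
      - (∑ k, A k i * FP k) * (GSi + ∑ l, B l i * GP l)
    = (∑ j, A j i * (FSi * GP j - FP j * GSi))
      + ∑ k, ∑ l, (B k i * A l i - A k i * B l i) * (FP k * GP l) := by
  simp only [add_mul, mul_add, Finset.sum_mul_sum, Finset.mul_sum, Finset.sum_mul,
    sub_mul, mul_sub, Finset.sum_sub_distrib, Finset.sum_add_distrib]
  have e1 : (∑ x : Fin n, FSi * (A x i * GP x)) = ∑ x : Fin n, A x i * (FSi * GP x) :=
    Finset.sum_congr rfl fun x _ => by ring
  have e1' : (∑ x : Fin n, A x i * FP x * GSi) = ∑ x : Fin n, A x i * (FP x * GSi) :=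
    Finset.sum_congr rfl fun x _ => by ring
  have e2 : (∑ x : Fin n, ∑ y : Fin n, B y i * FP y * (A x i * GP x))
      = ∑ x : Fin n, ∑ y : Fin n, B x i * A y i * (FP x * GP y) := by
    rw [Finset.sum_comm]
    exact Finset.sum_congr rfl fun x _ => Finset.sum_congr rfl fun y _ => by ring
  have e3 : (∑ x : Fin n, ∑ y : Fin n, A y i * FP y * (B x i * GP x))
      = ∑ x : Fin n, ∑ y : Fin n, A x i * B y i * (FP x * GP y) := by
    rw [Finset.sum_comm]
    exact Finset.sum_congr rfl fun x _ => Finset.sum_congr rfl fun y _ => by ring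
  rw [e1, e1', e2, e3]
  ring

lemma keyB_aux (a : Fin n → Fin n → (Fin n → ℝ) → ℝ)
    (c : Fin n → Fin n → Fin n → (Fin n → ℝ) → ℝ)
    (hc : ∀ i j m : Fin n, ∀ s : Fin n → ℝ,
      ∑ l : Fin n, (a i l s * fderiv ℝ (a j m) s (Pi.single l 1)
          - a j l s * fderiv ℝ (a i m) s (Pi.single l 1))
        = ∑ k : Fin n, c i j k s * a k m s)
    (π : Fin n → (Fin n → ℝ) × (Fin n → ℝ) → ℝ)
    (hπ : ∀ i z, π i z = ∑ j : Fin n, a i j z.1 * z.2 j)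
    (z : (Fin n → ℝ) × (Fin n → ℝ)) (k l : Fin n) :
    ∑ i, ((∑ m, z.2 m * fderiv ℝ (a k m) z.1 (Pi.single i 1)) * a l i z.1
        - a k i z.1 * (∑ m, z.2 m * fderiv ℝ (a l m) z.1 (Pi.single i 1)))
      = -∑ j, c k l j z.1 * π j z := by
  have step1 : ∀ i : Fin n,
      (∑ m, z.2 m * fderiv ℝ (a k m) z.1 (Pi.single i 1)) * a l i z.1
        - a k i z.1 * (∑ m, z.2 m * fderiv ℝ (a l m) z.1 (Pi.single i 1))
      = ∑ m, (-(z.2 m)) * (a k i z.1 * fderiv ℝ (a l m) z.1 (Pi.single i 1)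
          - a l i z.1 * fderiv ℝ (a k m) z.1 (Pi.single i 1)) := by
    intro i
    rw [Finset.sum_mul, Finset.mul_sum, ← Finset.sum_sub_distrib]
    exact Finset.sum_congr rfl fun m _ => by ring
  calc ∑ i, ((∑ m, z.2 m * fderiv ℝ (a k m) z.1 (Pi.single i 1)) * a l i z.1
        - a k i z.1 * (∑ m, z.2 m * fderiv ℝ (a l m) z.1 (Pi.single i 1)))
      = ∑ m, ∑ i, (-(z.2 m)) * (a k i z.1 * fderiv ℝ (a l m) z.1 (Pi.single i 1)
          - a l i z.1 * fderiv ℝ (a k m) z.1 (Pi.single i 1)) := by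
        rw [Finset.sum_comm]
        exact Finset.sum_congr rfl fun i _ => step1 i
    _ = ∑ m, (-(z.2 m)) * ∑ j, c k l j z.1 * a j m z.1 := by
        refine Finset.sum_congr rfl fun m _ => ?_
        rw [← Finset.mul_sum, hc k l m z.1]
    _ = -∑ j, c k l j z.1 * π j z := by
        simp only [Finset.mul_sum]
        rw [Finset.sum_comm]
        rw [← Finset.sum_neg_distrib]
        refine Finset.sum_congr rfl fun j _ => ?_
        rw [hπ j z, Finset.mul_sum, ← Finset.sum_neg_distrib]
        exact Finset.sum_congr rfl fun m _ => by ring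

end Aux

/-- The canonical Poisson bracket expressed in the anholonomic
variables `(s, π)`: for `f(s,p) = F(s,π(s,p))` and `g(s,p) = G(s,π(s,p))`,
`{f,g} = Σ_{i,j} a_j^i (∂F/∂s_i ∂G/∂π_j − ∂F/∂π_j ∂G/∂s_i)
        − Σ_{i,j,k} c_{ij}^k π_k ∂F/∂π_i ∂G/∂π_j`. -/
theorem poisson_bracket_anholonomic_frame (n : ℕ) (hn : 1 ≤ n)
    (a : Fin n → Fin n → (Fin n → ℝ) → ℝ)
    (ha : ∀ i j, ContDiff ℝ (⊤ : ℕ∞) (a i j))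
    (c : Fin n → Fin n → Fin n → (Fin n → ℝ) → ℝ)
    (hc : ∀ i j m : Fin n, ∀ s : Fin n → ℝ,
      ∑ l : Fin n, (a i l s * fderiv ℝ (a j m) s (Pi.single l 1)
          - a j l s * fderiv ℝ (a i m) s (Pi.single l 1))
        = ∑ k : Fin n, c i j k s * a k m s)
    (π : Fin n → (Fin n → ℝ) × (Fin n → ℝ) → ℝ)
    (hπ : ∀ i z, π i z = ∑ j : Fin n, a i j z.1 * z.2 j)
    (F G : (Fin n → ℝ) × (Fin n → ℝ) → ℝ)
    (hF : ContDiff ℝ (⊤ : ℕ∞) F) (hG : ContDiff ℝ (⊤ : ℕ∞) G)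
    (f g : (Fin n → ℝ) × (Fin n → ℝ) → ℝ)
    (hf : ∀ z, f z = F (z.1, fun i => π i z))
    (hg : ∀ z, g z = G (z.1, fun i => π i z)) :
    ∀ z : (Fin n → ℝ) × (Fin n → ℝ),
      poissonBracket f g z =
        (∑ i : Fin n, ∑ j : Fin n, a j i z.1 *
          (partialS F i (z.1, fun k => π k z) * partialP G j (z.1, fun k => π k z)
            - partialP F j (z.1, fun k => π k z) * partialS G i (z.1, fun k => π k z)))
        - ∑ i : Fin n, ∑ j : Fin n, ∑ k : Fin n, c i j k z.1 * π k z *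
            partialP F i (z.1, fun l => π l z) * partialP G j (z.1, fun l => π l z) := by
  intro z
  have hPf := partials_f_aux a ha π hπ F hF f hf z
  have hPg := partials_f_aux a ha π hπ G hG g hg z
  rw [poissonBracket]
  calc
    ∑ i : Fin n, (partialS f i z * partialP g i z - partialP f i z * partialS g i z)
      = ∑ i : Fin n,
          ((partialS F i (z.1, fun k => π k z)
              + ∑ k, (∑ m, z.2 m * fderiv ℝ (a k m) z.1 (Pi.single i 1))
                  * partialP F k (z.1, fun k => π k z))
            * (∑ l, a l i z.1 * partialP G l (z.1, fun k => π k z))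
          - (∑ k, a k i z.1 * partialP F k (z.1, fun k => π k z))
            * (partialS G i (z.1, fun k => π k z)
              + ∑ l, (∑ m, z.2 m * fderiv ℝ (a l m) z.1 (Pi.single i 1))
                  * partialP G l (z.1, fun k => π k z))) := by
        refine Finset.sum_congr rfl fun i _ => ?_
        rw [(hPf i).1, (hPf i).2, (hPg i).1, (hPg i).2]
    _ = ∑ i : Fin n,
          ((∑ j, a j i z.1 *
            (partialS F i (z.1, fun k => π k z) * partialP G j (z.1, fun k => π k z)
              - partialP F j (z.1, fun k => π k z) * partialS G i (z.1, fun k => π k z)))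
          + ∑ k, ∑ l,
              ((∑ m, z.2 m * fderiv ℝ (a k m) z.1 (Pi.single i 1)) * a l i z.1
                - a k i z.1 * (∑ m, z.2 m * fderiv ℝ (a l m) z.1 (Pi.single i 1)))
              * (partialP F k (z.1, fun k => π k z) * partialP G l (z.1, fun k => π k z))) := by
        refine Finset.sum_congr rfl fun i _ => ?_
        exact alg_i_aux i _ _ _ _ (fun k i => a k i z.1)
          (fun k i => ∑ m, z.2 m * fderiv ℝ (a k m) z.1 (Pi.single i 1))
    _ = (∑ i : Fin n, ∑ j : Fin n, a j i z.1 *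
          (partialS F i (z.1, fun k => π k z) * partialP G j (z.1, fun k => π k z)
            - partialP F j (z.1, fun k => π k z) * partialS G i (z.1, fun k => π k z)))
        + ∑ i : Fin n, ∑ k : Fin n, ∑ l : Fin n,
              ((∑ m, z.2 m * fderiv ℝ (a k m) z.1 (Pi.single i 1)) * a l i z.1
                - a k i z.1 * (∑ m, z.2 m * fderiv ℝ (a l m) z.1 (Pi.single i 1)))
              * (partialP F k (z.1, fun k => π k z) * partialP G l (z.1, fun k => π k z)) := by
        rw [Finset.sum_add_distrib]
    _ = (∑ i : Fin n, ∑ j : Fin n, a j i z.1 *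
          (partialS F i (z.1, fun k => π k z) * partialP G j (z.1, fun k => π k z)
            - partialP F j (z.1, fun k => π k z) * partialS G i (z.1, fun k => π k z)))
        - ∑ i : Fin n, ∑ j : Fin n, ∑ k : Fin n, c i j k z.1 * π k z *
            partialP F i (z.1, fun l => π l z) * partialP G j (z.1, fun l => π l z) := by
        rw [sub_eq_add_neg]
        congr 1
        rw [Finset.sum_comm]
        calc
          ∑ k : Fin n, ∑ i : Fin n, ∑ l : Fin n,
              ((∑ m, z.2 m * fderiv ℝ (a k m) z.1 (Pi.single i 1)) * a l i z.1
                - a k i z.1 * (∑ m, z.2 m * fderiv ℝ (a l m) z.1 (Pi.single i 1)))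
              * (partialP F k (z.1, fun k => π k z) * partialP G l (z.1, fun k => π k z))
            = ∑ k : Fin n, ∑ l : Fin n, ∑ i : Fin n,
              ((∑ m, z.2 m * fderiv ℝ (a k m) z.1 (Pi.single i 1)) * a l i z.1
                - a k i z.1 * (∑ m, z.2 m * fderiv ℝ (a l m) z.1 (Pi.single i 1)))
              * (partialP F k (z.1, fun k => π k z) * partialP G l (z.1, fun k => π k z)) := by
              exact Finset.sum_congr rfl fun k _ => by rw [Finset.sum_comm]
          _ = ∑ k : Fin n, ∑ l : Fin n,
                (-∑ j, c k l j z.1 * π j z)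
                * (partialP F k (z.1, fun k => π k z) * partialP G l (z.1, fun k => π k z)) := by
              refine Finset.sum_congr rfl fun k _ => Finset.sum_congr rfl fun l _ => ?_
              rw [← Finset.sum_mul, keyB_aux a c hc π hπ z k l]
          _ = -∑ i : Fin n, ∑ j : Fin n, ∑ k : Fin n, c i j k z.1 * π k z *
                partialP F i (z.1, fun l => π l z) * partialP G j (z.1, fun l => π l z) := by
              rw [← Finset.sum_neg_distrib]
              refine Finset.sum_congr rfl fun k _ => ?_
              rw [← Finset.sum_neg_distrib]
              refine Finset.sum_congr rfl fun l _ => ?_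
              rw [neg_mul, Finset.sum_mul]
              congr 1
              exact Finset.sum_congr rfl fun j _ => by ring
end

section
/- In the three-body body-frame setup, the kinetic energy decomposes into vertical and horizontal parts: for all ξ, q̇ ∈ ℝ³ and all shape points q at which 𝕀(q) is invertible, ½(‖v₁‖² + ‖v₂‖²) = ½ (ξ + Σ_α A_α q̇_α) · 𝕀(ξ + Σ_β A_β q̇_β) + ½ Σ_{α,β} d_{αβ} q̇_α q̇_β. -/
open scoped BigOperators Matrix

/-- Partial derivative `∂r/∂q_α` of a body-fixed Jacobi vector with respect to
the shape coordinate `q_α`. -/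
noncomputable def pdq (r : (Fin 3 → ℝ) → (Fin 3 → ℝ)) (q : Fin 3 → ℝ) (α : Fin 3) :
    Fin 3 → ℝ :=
  fderiv ℝ r q (Pi.single α 1)

/-- The moment of inertia operator `𝕀u = r₁ × (u × r₁) + r₂ × (u × r₂)`. -/
def inertiaOp (r₁ r₂ : (Fin 3 → ℝ) → (Fin 3 → ℝ)) (q u : Fin 3 → ℝ) : Fin 3 → ℝ :=
  (r₁ q) ⨯₃ (u ⨯₃ (r₁ q)) + (r₂ q) ⨯₃ (u ⨯₃ (r₂ q))

/-- The body velocity `v = ξ × r + Σ_α (∂r/∂q_α) q̇_α`. -/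
noncomputable def bodyVel (r : (Fin 3 → ℝ) → (Fin 3 → ℝ)) (q ξ qdot : Fin 3 → ℝ) :
    Fin 3 → ℝ :=
  ξ ⨯₃ (r q) + ∑ α : Fin 3, qdot α • pdq r q α

/-- Euclidean dot product on `ℝ³`. -/
def dot3 (u v : Fin 3 → ℝ) : ℝ := ∑ i : Fin 3, u i * v i

/-- The mechanical connection vectors `A_α = 𝕀⁻¹(r₁ × ∂r₁/∂q_α + r₂ × ∂r₂/∂q_α)`,
expressed with a given inverse `Iinv` of the inertia operator. -/
noncomputable def mechConn (r₁ r₂ : (Fin 3 → ℝ) → (Fin 3 → ℝ))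
    (Iinv : (Fin 3 → ℝ) → (Fin 3 → ℝ)) (q : Fin 3 → ℝ) (α : Fin 3) : Fin 3 → ℝ :=
  Iinv ((r₁ q) ⨯₃ (pdq r₁ q α) + (r₂ q) ⨯₃ (pdq r₂ q α))

/-- The metric `h_{αβ} = ∂r₁/∂q_α · ∂r₁/∂q_β + ∂r₂/∂q_α · ∂r₂/∂q_β`. -/
noncomputable def shapeMetric (r₁ r₂ : (Fin 3 → ℝ) → (Fin 3 → ℝ)) (q : Fin 3 → ℝ)
    (α β : Fin 3) : ℝ :=
  dot3 (pdq r₁ q α) (pdq r₁ q β) + dot3 (pdq r₂ q α) (pdq r₂ q β)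

/-- The horizontal metric `d_{αβ} = h_{αβ} − A_α · (𝕀 A_β)`. -/
noncomputable def horizMetric (r₁ r₂ : (Fin 3 → ℝ) → (Fin 3 → ℝ))
    (Iinv : (Fin 3 → ℝ) → (Fin 3 → ℝ)) (q : Fin 3 → ℝ) (α β : Fin 3) : ℝ :=
  shapeMetric r₁ r₂ q α β
    - dot3 (mechConn r₁ r₂ Iinv q α) (inertiaOp r₁ r₂ q (mechConn r₁ r₂ Iinv q β))

/-- The kinetic energy decomposes into vertical and horizontal
parts: `½(‖v₁‖² + ‖v₂‖²) = ½ (ξ + Σ A_α q̇_α)·𝕀(ξ + Σ A_β q̇_β) + ½ Σ d_{αβ} q̇_α q̇_β`. -/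
theorem kinetic_energy_vertical_horizontal_decomposition
    (r₁ r₂ : (Fin 3 → ℝ) → (Fin 3 → ℝ))
    (hr₁ : ContDiff ℝ (⊤ : ℕ∞) r₁) (hr₂ : ContDiff ℝ (⊤ : ℕ∞) r₂)
    (q ξ qdot : Fin 3 → ℝ)
    (Iinv : (Fin 3 → ℝ) → (Fin 3 → ℝ))
    (hIinv₁ : ∀ u, inertiaOp r₁ r₂ q (Iinv u) = u)
    (hIinv₂ : ∀ u, Iinv (inertiaOp r₁ r₂ q u) = u) :
    (1 / 2) * (dot3 (bodyVel r₁ q ξ qdot) (bodyVel r₁ q ξ qdot)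
        + dot3 (bodyVel r₂ q ξ qdot) (bodyVel r₂ q ξ qdot))
      = (1 / 2) * dot3 (ξ + ∑ α : Fin 3, qdot α • mechConn r₁ r₂ Iinv q α)
          (inertiaOp r₁ r₂ q (ξ + ∑ β : Fin 3, qdot β • mechConn r₁ r₂ Iinv q β))
        + (1 / 2) * ∑ α : Fin 3, ∑ β : Fin 3,
            horizMetric r₁ r₂ Iinv q α β * qdot α * qdot β := by
  have hA : ∀ α : Fin 3, inertiaOp r₁ r₂ q (mechConn r₁ r₂ Iinv q α)
      = (r₁ q) ⨯₃ (pdq r₁ q α) + (r₂ q) ⨯₃ (pdq r₂ q α) := fun α => hIinv₁ _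
  have hE00 := congrFun (hA 0) 0
  have hE01 := congrFun (hA 0) 1
  have hE02 := congrFun (hA 0) 2
  have hE10 := congrFun (hA 1) 0
  have hE11 := congrFun (hA 1) 1
  have hE12 := congrFun (hA 1) 2
  have hE20 := congrFun (hA 2) 0
  have hE21 := congrFun (hA 2) 1
  have hE22 := congrFun (hA 2) 2
  simp only [inertiaOp, cross_apply, Pi.add_apply, Matrix.cons_val_zero,
    Matrix.cons_val_one, Matrix.head_cons, Matrix.cons_val_two, Matrix.tail_cons]
    at hE00 hE01 hE02 hE10 hE11 hE12 hE20 hE21 hE22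
  simp only [bodyVel, dot3, inertiaOp, horizMetric, shapeMetric, Fin.sum_univ_three,
    cross_apply, Pi.add_apply, Pi.smul_apply, smul_eq_mul, Finset.sum_apply,
    Matrix.cons_val_zero, Matrix.cons_val_one, Matrix.head_cons,
    Matrix.cons_val_two, Matrix.tail_cons]
  linear_combination (-(qdot 0 * ξ 0)) * hE00 + (-(qdot 0 * ξ 1)) * hE01 + (-(qdot 0 * ξ 2)) * hE02 + (-(qdot 1 * ξ 0)) * hE10 + (-(qdot 1 * ξ 1)) * hE11 + (-(qdot 1 * ξ 2)) * hE12 + (-(qdot 2 * ξ 0)) * hE20 + (-(qdot 2 * ξ 1)) * hE21 + (-(qdot 2 * ξ 2)) * hE22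
end

section
/- In the three-body body-frame setup, suppose that at a shape point q both 𝕀(q) and the horizontal metric matrix d = (d_{αβ}) are invertible. Define, for given ξ, q̇ ∈ ℝ³, the body angular momentum J = 𝕀(ξ + Σ_α A_α q̇_α) and the conjugate momenta p_α = Σ_β d_{αβ} q̇_β + J · A_α. Then the Hamiltonian expression equals the kinetic energy: ½ J · 𝕀⁻¹J + ½ Σ_{α,β} d^{αβ} (p_α − J·A_α)(p_β − J·A_β) = ½(‖v₁‖² + ‖v₂‖²), where (d^{αβ}) is the inverse matrix of (d_{αβ}). -/
open scoped BigOperators Matrix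

set_option maxHeartbeats 2000000 in
set_option maxRecDepth 4000 in
/-- With `J = 𝕀(ξ + Σ_α A_α q̇_α)` and
`p_α = Σ_β d_{αβ} q̇_β + J·A_α`, the Hamiltonian expression
`½ J·𝕀⁻¹J + ½ Σ d^{αβ}(p_α − J·A_α)(p_β − J·A_β)` equals the kinetic energy
`½(‖v₁‖² + ‖v₂‖²)`. -/
theorem hamiltonian_equals_kinetic_energy
    (r₁ r₂ : (Fin 3 → ℝ) → (Fin 3 → ℝ))
    (hr₁ : ContDiff ℝ (⊤ : ℕ∞) r₁) (hr₂ : ContDiff ℝ (⊤ : ℕ∞) r₂)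
    (q ξ qdot : Fin 3 → ℝ)
    (Iinv : (Fin 3 → ℝ) → (Fin 3 → ℝ))
    (hIinv₁ : ∀ u, inertiaOp r₁ r₂ q (Iinv u) = u)
    (hIinv₂ : ∀ u, Iinv (inertiaOp r₁ r₂ q u) = u)
    (dinv : Matrix (Fin 3) (Fin 3) ℝ)
    (hdinv₁ : ∀ α γ : Fin 3,
      ∑ β : Fin 3, horizMetric r₁ r₂ Iinv q α β * dinv β γ = (1 : Matrix (Fin 3) (Fin 3) ℝ) α γ)
    (hdinv₂ : ∀ α γ : Fin 3,
      ∑ β : Fin 3, dinv α β * horizMetric r₁ r₂ Iinv q β γ = (1 : Matrix (Fin 3) (Fin 3) ℝ) α γ)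
    (J : Fin 3 → ℝ)
    (hJ : J = inertiaOp r₁ r₂ q (ξ + ∑ α : Fin 3, qdot α • mechConn r₁ r₂ Iinv q α))
    (p : Fin 3 → ℝ)
    (hp : ∀ α, p α = (∑ β : Fin 3, horizMetric r₁ r₂ Iinv q α β * qdot β)
      + dot3 J (mechConn r₁ r₂ Iinv q α)) :
    (1 / 2) * dot3 J (Iinv J)
      + (1 / 2) * ∑ α : Fin 3, ∑ β : Fin 3, dinv α β
          * (p α - dot3 J (mechConn r₁ r₂ Iinv q α))
          * (p β - dot3 J (mechConn r₁ r₂ Iinv q β))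
      = (1 / 2) * (dot3 (bodyVel r₁ q ξ qdot) (bodyVel r₁ q ξ qdot)
          + dot3 (bodyVel r₂ q ξ qdot) (bodyVel r₂ q ξ qdot)) := by
  
  have hIA : ∀ α, inertiaOp r₁ r₂ q (mechConn r₁ r₂ Iinv q α)
      = (r₁ q) ⨯₃ (pdq r₁ q α) + (r₂ q) ⨯₃ (pdq r₂ q α) := fun α => hIinv₁ _
  have hIJ : Iinv J = ξ + ∑ α : Fin 3, qdot α • mechConn r₁ r₂ Iinv q α := by
    rw [hJ, hIinv₂]
  set D : Fin 3 → Fin 3 → ℝ := horizMetric r₁ r₂ Iinv q with hDdef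
  have hD : ∀ α γ : Fin 3, dinv α 0 * D 0 γ + dinv α 1 * D 1 γ + dinv α 2 * D 2 γ
      = if α = γ then (1:ℝ) else 0 := by
    intro α γ
    have := hdinv₂ α γ
    simpa [Fin.sum_univ_three, Matrix.one_apply] using this
  have hq : ∀ α : Fin 3,
      dinv α 0 * (D 0 0 * qdot 0 + D 0 1 * qdot 1 + D 0 2 * qdot 2)
      + dinv α 1 * (D 1 0 * qdot 0 + D 1 1 * qdot 1 + D 1 2 * qdot 2)
      + dinv α 2 * (D 2 0 * qdot 0 + D 2 1 * qdot 1 + D 2 2 * qdot 2) = qdot α := by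
    intro α
    have h0 := hD α 0
    have h1 := hD α 1
    have h2 := hD α 2
    have key : dinv α 0 * (D 0 0 * qdot 0 + D 0 1 * qdot 1 + D 0 2 * qdot 2)
        + dinv α 1 * (D 1 0 * qdot 0 + D 1 1 * qdot 1 + D 1 2 * qdot 2)
        + dinv α 2 * (D 2 0 * qdot 0 + D 2 1 * qdot 1 + D 2 2 * qdot 2)
        = (if α = 0 then (1:ℝ) else 0) * qdot 0
          + (if α = 1 then (1:ℝ) else 0) * qdot 1
          + (if α = 2 then (1:ℝ) else 0) * qdot 2 := by
      linear_combination qdot 0 * h0 + qdot 1 * h1 + qdot 2 * h2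
    rw [key]
    fin_cases α <;> simp
  have hpJ : ∀ α, p α - dot3 J (mechConn r₁ r₂ Iinv q α)
      = D α 0 * qdot 0 + D α 1 * qdot 1 + D α 2 * qdot 2 := by
    intro α
    rw [hp]
    simp only [Fin.sum_univ_three]
    ring
  have hsum : (∑ α : Fin 3, ∑ β : Fin 3, dinv α β
          * (p α - dot3 J (mechConn r₁ r₂ Iinv q α))
          * (p β - dot3 J (mechConn r₁ r₂ Iinv q β)))
      = ∑ α : Fin 3, qdot α * (D α 0 * qdot 0 + D α 1 * qdot 1 + D α 2 * qdot 2) := by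
    simp only [hpJ, Fin.sum_univ_three]
    linear_combination
      (D 0 0 * qdot 0 + D 0 1 * qdot 1 + D 0 2 * qdot 2) * hq 0
      + (D 1 0 * qdot 0 + D 1 1 * qdot 1 + D 1 2 * qdot 2) * hq 1
      + (D 2 0 * qdot 0 + D 2 1 * qdot 1 + D 2 2 * qdot 2) * hq 2
  rw [hsum, hIJ, hJ]
  have hC00 := congrFun (hIA 0) (0 : Fin 3)
  have hC01 := congrFun (hIA 0) (1 : Fin 3)
  have hC02 := congrFun (hIA 0) (2 : Fin 3)
  have hC10 := congrFun (hIA 1) (0 : Fin 3)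
  have hC11 := congrFun (hIA 1) (1 : Fin 3)
  have hC12 := congrFun (hIA 1) (2 : Fin 3)
  have hC20 := congrFun (hIA 2) (0 : Fin 3)
  have hC21 := congrFun (hIA 2) (1 : Fin 3)
  have hC22 := congrFun (hIA 2) (2 : Fin 3)
  simp only [hDdef, horizMetric, shapeMetric, hIA]
  simp only [bodyVel, inertiaOp, dot3,
    cross_apply, Fin.sum_univ_three, Pi.add_apply, Pi.smul_apply, smul_eq_mul,
    Finset.sum_apply, Matrix.cons_val_zero, Matrix.cons_val_one, Matrix.head_cons,
    Matrix.cons_val_two, Matrix.tail_cons] at hC00 hC01 hC02 hC10 hC11 hC12 hC20 hC21 hC22 ⊢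
  linear_combination (qdot 0 * ξ 0 + (1/2) * qdot 0 * (qdot 0 * mechConn r₁ r₂ Iinv q 0 0 + qdot 1 * mechConn r₁ r₂ Iinv q 1 0 + qdot 2 * mechConn r₁ r₂ Iinv q 2 0)) * hC00
      + (qdot 0 * ξ 1 + (1/2) * qdot 0 * (qdot 0 * mechConn r₁ r₂ Iinv q 0 1 + qdot 1 * mechConn r₁ r₂ Iinv q 1 1 + qdot 2 * mechConn r₁ r₂ Iinv q 2 1)) * hC01
      + (qdot 0 * ξ 2 + (1/2) * qdot 0 * (qdot 0 * mechConn r₁ r₂ Iinv q 0 2 + qdot 1 * mechConn r₁ r₂ Iinv q 1 2 + qdot 2 * mechConn r₁ r₂ Iinv q 2 2)) * hC02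
      + (qdot 1 * ξ 0 + (1/2) * qdot 1 * (qdot 0 * mechConn r₁ r₂ Iinv q 0 0 + qdot 1 * mechConn r₁ r₂ Iinv q 1 0 + qdot 2 * mechConn r₁ r₂ Iinv q 2 0)) * hC10
      + (qdot 1 * ξ 1 + (1/2) * qdot 1 * (qdot 0 * mechConn r₁ r₂ Iinv q 0 1 + qdot 1 * mechConn r₁ r₂ Iinv q 1 1 + qdot 2 * mechConn r₁ r₂ Iinv q 2 1)) * hC11
      + (qdot 1 * ξ 2 + (1/2) * qdot 1 * (qdot 0 * mechConn r₁ r₂ Iinv q 0 2 + qdot 1 * mechConn r₁ r₂ Iinv q 1 2 + qdot 2 * mechConn r₁ r₂ Iinv q 2 2)) * hC12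
      + (qdot 2 * ξ 0 + (1/2) * qdot 2 * (qdot 0 * mechConn r₁ r₂ Iinv q 0 0 + qdot 1 * mechConn r₁ r₂ Iinv q 1 0 + qdot 2 * mechConn r₁ r₂ Iinv q 2 0)) * hC20
      + (qdot 2 * ξ 1 + (1/2) * qdot 2 * (qdot 0 * mechConn r₁ r₂ Iinv q 0 1 + qdot 1 * mechConn r₁ r₂ Iinv q 1 1 + qdot 2 * mechConn r₁ r₂ Iinv q 2 1)) * hC21
      + (qdot 2 * ξ 2 + (1/2) * qdot 2 * (qdot 0 * mechConn r₁ r₂ Iinv q 0 2 + qdot 1 * mechConn r₁ r₂ Iinv q 1 2 + qdot 2 * mechConn r₁ r₂ Iinv q 2 2)) * hC22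
end

section
/- Let f ≥ 1 and let ω₁, …, ω_f ∈ ℝ be rationally independent, i.e. for all integers m₁, …, m_f, Σ_k m_k ω_k = 0 implies m₁ = … = m_f = 0. Let H₂(q,p) = Σ_{k=1}^f (ω_k/2)(q_k² + p_k²) and let P be a homogeneous real polynomial of degree n on ℝ^f × ℝ^f satisfying {H₂, P} = 0, where {·,·} is the canonical Poisson bracket. Then: if n is odd, P = 0; and if n is even, P lies in the linear span of the monomials I₁^{α₁} ⋯ I_f^{α_f} with Σ_k α_k = n/2, where I_k = (q_k² + p_k²)/2. -/
open scoped BigOperators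

/-- The canonical Poisson bracket of polynomials on `ℝ^f × ℝ^f`, with the
variables indexed by `Sum.inl k ↔ q_k` and `Sum.inr k ↔ p_k`:
`{A,B} = Σ_k (∂A/∂q_k ∂B/∂p_k − ∂A/∂p_k ∂B/∂q_k)`. -/
noncomputable def mvPB {f : ℕ} (A B : MvPolynomial (Fin f ⊕ Fin f) ℝ) :
    MvPolynomial (Fin f ⊕ Fin f) ℝ :=
  ∑ k : Fin f,
    (MvPolynomial.pderiv (Sum.inl k) A * MvPolynomial.pderiv (Sum.inr k) B
      - MvPolynomial.pderiv (Sum.inr k) A * MvPolynomial.pderiv (Sum.inl k) B)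

/-- The action polynomial `I_k = (q_k² + p_k²)/2`. -/
noncomputable def actionPoly {f : ℕ} (k : Fin f) : MvPolynomial (Fin f ⊕ Fin f) ℝ :=
  MvPolynomial.C (2⁻¹ : ℝ) *
    ((MvPolynomial.X (Sum.inl k)) ^ 2 + (MvPolynomial.X (Sum.inr k)) ^ 2)

/-!
In the complex coordinates `z_k = q_k + i p_k`, `w_k = q_k - i p_k` the derivation
`{H₂, ·} = Σ ω_k (q_k ∂_{p_k} - p_k ∂_{q_k})` becomes diagonal,
`i Σ ω_k (z_k ∂_{z_k} - w_k ∂_{w_k})`, and multiplies the monomial `z^a w^b` by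
`i Σ ω_k (a_k - b_k)`. By rational independence this vanishes only for `a = b`, and
`z^a w^a = ∏ (2 I_k)^{a_k}`. So the kernel is spanned over `ℂ` by the monomials in the actions;
taking real parts of coefficients brings this back to `ℝ`, and taking the homogeneous component of
degree `n` keeps only the `I^α` with `2 |α| = n`.
-/

open MvPolynomial Submodule Complex

namespace MvPolynomial

section WeightedEuler

variable {σ R : Type*} [CommRing R]

noncomputable def weightedEuler (w : σ → R) :
    Derivation R (MvPolynomial σ R) (MvPolynomial σ R) :=
  mkDerivation R fun j => w j • X j

theorem weightedEuler_X (w : σ → R) (j : σ) : weightedEuler w (X j) = w j • X j :=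
  mkDerivation_X _ _ _

variable [Fintype σ]

theorem weightedEuler_monomial (w : σ → R) (m : σ →₀ ℕ) (a : R) :
    weightedEuler w (monomial m a) = (∑ j, (m j : R) * w j) • monomial m a := by
  rw [weightedEuler, mkDerivation_monomial, Finsupp.sum_fintype _ _ (by simp), Finset.sum_smul,
    Finset.smul_sum]
  refine Finset.sum_congr rfl fun j _ => ?_
  have h := X_mul_pderiv_monomial (i := j) (m := m) (r := a)
  rw [pderiv_monomial] at h
  rw [smul_eq_mul, mul_smul_comm, smul_comm a (w j), ← smul_mul_assoc, smul_monomial, smul_eq_mul,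
    mul_comm (monomial _ _), h, ← Nat.cast_smul_eq_nsmul R, smul_smul, mul_comm]

theorem coeff_weightedEuler (w : σ → R) (A : MvPolynomial σ R) (m : σ →₀ ℕ) :
    coeff m (weightedEuler w A) = (∑ j, (m j : R) * w j) * coeff m A := by
  classical
  induction A using MvPolynomial.induction_on' with
  | monomial s a =>
    rw [weightedEuler_monomial, coeff_smul, coeff_monomial, smul_eq_mul]
    split_ifs with h
    · rw [h]
    · rw [mul_zero, mul_zero]
  | add p q hp hq => rw [map_add, coeff_add, coeff_add, hp, hq, mul_add]

theorem weight_eq_zero_of_weightedEuler_eq_zero [IsDomain R] {w : σ → R} {A : MvPolynomial σ R}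
    (hA : weightedEuler w A = 0) {m : σ →₀ ℕ} (hm : m ∈ A.support) :
    ∑ j, (m j : R) * w j = 0 := by
  have h := coeff_weightedEuler w A m
  rw [hA, coeff_zero, eq_comm, mul_eq_zero] at h
  exact h.resolve_right (mem_support_iff.mp hm)

end WeightedEuler

theorem mem_span_image_of_isHomogeneous {σ R ι : Type*} [CommSemiring R]
    {s : ι → MvPolynomial σ R} {deg : ι → ℕ} (hs : ∀ i, (s i).IsHomogeneous (deg i))
    {P : MvPolynomial σ R} {n : ℕ} (hP : P.IsHomogeneous n) (hPs : P ∈ span R (Set.range s)) :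
    P ∈ span R (s '' {i | deg i = n}) := by
  rw [← homogeneousComponent_eq_self hP]
  refine (map_span_le (homogeneousComponent n) _ _).mpr ?_ (mem_map_of_mem hPs)
  rintro _ ⟨i, rfl⟩
  rw [homogeneousComponent_of_mem (hs i)]
  split_ifs with h
  · exact subset_span ⟨i, h.symm, rfl⟩
  · exact zero_mem _

theorem mem_span_of_map_mem_span_complex {σ ι : Type*} {s : ι → MvPolynomial σ ℝ}
    {P : MvPolynomial σ ℝ}
    (hP : map (algebraMap ℝ ℂ) P ∈ span ℂ (Set.range fun i => map (algebraMap ℝ ℂ) (s i))) :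
    P ∈ span ℝ (Set.range s) := by
  obtain ⟨c, hc⟩ := Finsupp.mem_span_range_iff_exists_finsupp.mp hP
  refine Finsupp.mem_span_range_iff_exists_finsupp.mpr ⟨c.mapRange Complex.re Complex.zero_re, ?_⟩
  ext e
  have h := congrArg (fun Q => (coeff e Q).re) hc
  simp only [Finsupp.sum, coeff_sum, coeff_smul, coeff_map, Complex.re_sum] at h
  rw [Finsupp.sum_mapRange_index (by simp)]
  simpa [Finsupp.sum, coeff_sum, Complex.mul_re] using h

end MvPolynomial

namespace Oscillator

variable {ι R : Type*} [CommRing R]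

section Rotation

variable [Fintype ι]

noncomputable def rotation (c : ι → R) :
    Derivation R (MvPolynomial (ι ⊕ ι) R) (MvPolynomial (ι ⊕ ι) R) :=
  ∑ k, c k • ((X (Sum.inl k) : MvPolynomial (ι ⊕ ι) R) • pderiv (Sum.inr k) -
    (X (Sum.inr k) : MvPolynomial (ι ⊕ ι) R) • pderiv (Sum.inl k))

theorem rotation_apply (c : ι → R) (A : MvPolynomial (ι ⊕ ι) R) :
    rotation c A = ∑ k, c k •
      (X (Sum.inl k) * pderiv (Sum.inr k) A - X (Sum.inr k) * pderiv (Sum.inl k) A) := by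
  rw [rotation, ← Derivation.coeFnAddMonoidHom_apply, map_sum, Finset.sum_apply]
  rfl

theorem rotation_X_inl (c : ι → R) (k : ι) :
    rotation c (X (Sum.inl k)) = -(c k • X (Sum.inr k)) := by
  classical simp [rotation_apply, Pi.single_apply]

theorem rotation_X_inr (c : ι → R) (k : ι) :
    rotation c (X (Sum.inr k)) = c k • X (Sum.inl k) := by
  classical simp [rotation_apply, Pi.single_apply]

theorem map_rotation {S : Type*} [CommRing S] (φ : R →+* S) (c : ι → R)
    (A : MvPolynomial (ι ⊕ ι) R) : map φ (rotation c A) = rotation (φ ∘ c) (map φ A) := by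
  simp [rotation_apply, smul_eq_C_mul, pderiv_map]

end Rotation

theorem mvPB_eq_rotation {f : ℕ} (ω : Fin f → ℝ) (A : MvPolynomial (Fin f ⊕ Fin f) ℝ) :
    mvPB (∑ k, C (ω k / 2) * (X (Sum.inl k) ^ 2 + X (Sum.inr k) ^ 2)) A = rotation ω A := by
  classical
  rw [mvPB, rotation_apply]
  refine Finset.sum_congr rfl fun k _ => ?_
  have hC : (C (ω k) : MvPolynomial (Fin f ⊕ Fin f) ℝ) = C (ω k / 2) * 2 := by
    rw [← map_ofNat C 2, ← C_mul, div_mul_cancel₀ _ two_ne_zero]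
  simp only [map_sum, pderiv_C_mul, map_add, pderiv_pow, pderiv_X, Pi.single_apply, Sum.inl.injEq,
    Sum.inr.injEq, reduceCtorEq, if_false, mul_ite, mul_one, mul_zero, add_zero, zero_add,
    Finset.sum_ite_eq', Finset.mem_univ, if_true, smul_eq_C_mul, hC]
  ring

/-- `z_k = q_k + i p_k` at `Sum.inl k` and `w_k = q_k - i p_k` at `Sum.inr k`, as polynomials in
`q, p`. -/
noncomputable def complexVar : ι ⊕ ι → MvPolynomial (ι ⊕ ι) ℂ :=
  Sum.elim (fun k => X (Sum.inl k) + I • X (Sum.inr k)) fun k => X (Sum.inl k) - I • X (Sum.inr k)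

/-- `q_k = (z_k + w_k) / 2` and `p_k = -i (z_k - w_k) / 2`, as polynomials in `z, w`. -/
noncomputable def realVar : ι ⊕ ι → MvPolynomial (ι ⊕ ι) ℂ :=
  Sum.elim (fun k => (2⁻¹ : ℂ) • (X (Sum.inl k) + X (Sum.inr k)))
    fun k => (-I / 2) • (X (Sum.inl k) - X (Sum.inr k))

theorem aeval_complexVar_aeval_realVar (A : MvPolynomial (ι ⊕ ι) ℂ) :
    aeval complexVar (aeval realVar A) = A := by
  have h : (aeval complexVar).comp (aeval realVar) = AlgHom.id ℂ (MvPolynomial (ι ⊕ ι) ℂ) := by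
    refine algHom_ext fun j => ?_
    rcases j with k | k <;> simp only [AlgHom.comp_apply, aeval_X, realVar, complexVar,
      Sum.elim_inl, Sum.elim_inr, map_smul, map_add, map_sub, AlgHom.id_apply]
    · module
    · linear_combination (norm := module) -(I_mul_I • (X (Sum.inr k) : MvPolynomial (ι ⊕ ι) ℂ))
  exact congrArg (· A) h

theorem complexVar_inl_mul_complexVar_inr (k : ι) :
    complexVar (Sum.inl k) * complexVar (Sum.inr k) = X (Sum.inl k) ^ 2 + X (Sum.inr k) ^ 2 := by
  simp only [complexVar, Sum.elim_inl, Sum.elim_inr, smul_eq_C_mul]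
  linear_combination (-(X (Sum.inr k) : MvPolynomial (ι ⊕ ι) ℂ) ^ 2) *
    (by rw [← C_mul, I_mul_I, C_neg, C_1] : (C I * C I : MvPolynomial (ι ⊕ ι) ℂ) = -1)

/-- The eigenvalues of `rotation c` on the complex coordinates `z_k` and `w_k`. -/
noncomputable def rotationWeight (c : ι → ℂ) : ι ⊕ ι → ℂ :=
  Sum.elim (fun k => I * c k) fun k => -(I * c k)

section Diagonalization

variable [Fintype ι]

theorem aeval_realVar_rotation_X (c : ι → ℂ) (j : ι ⊕ ι) :
    aeval realVar (rotation c (X j)) = weightedEuler (rotationWeight c) (realVar j) := by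
  rcases j with k | k
  · simp only [rotation_X_inl, realVar, rotationWeight, Sum.elim_inl, Sum.elim_inr, map_neg,
      map_smul, aeval_X, Derivation.map_smul, Derivation.map_add, weightedEuler_X]
    module
  · simp only [rotation_X_inr, realVar, rotationWeight, Sum.elim_inl, Sum.elim_inr, map_smul,
      aeval_X, Derivation.map_smul, Derivation.map_sub, weightedEuler_X]
    linear_combination (norm := module)
      (c k / 2) • (I_mul_I • (X (Sum.inl k) + X (Sum.inr k) : MvPolynomial (ι ⊕ ι) ℂ))

theorem aeval_realVar_rotation (c : ι → ℂ) (A : MvPolynomial (ι ⊕ ι) ℂ) :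
    aeval realVar (rotation c A) = weightedEuler (rotationWeight c) (aeval realVar A) := by
  induction A using MvPolynomial.induction_on with
  | C a => simp only [derivation_C, aeval_C, map_zero, algebraMap_eq]
  | add p q hp hq => simp only [map_add, hp, hq]
  | mul_X p j hp =>
    simp only [Derivation.leibniz, map_add, map_mul, smul_eq_mul, hp, aeval_realVar_rotation_X,
      aeval_X]

theorem apply_inr_eq_apply_inl_of_weight_eq_zero {ω : ι → ℝ}
    (hω : ∀ m : ι → ℤ, ∑ k, (m k : ℝ) * ω k = 0 → ∀ k, m k = 0) {m : ι ⊕ ι →₀ ℕ}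
    (h : ∑ j, (m j : ℂ) * rotationWeight (fun k => (ω k : ℂ)) j = 0) (k : ι) :
    m (Sum.inr k) = m (Sum.inl k) := by
  have hsum : ∑ k, ((m (Sum.inl k) - m (Sum.inr k) : ℤ) : ℝ) * ω k = 0 := by
    apply Complex.ofReal_injective
    rw [Fintype.sum_sum_type, ← Finset.sum_add_distrib] at h
    have hI : I * ((∑ k, ((m (Sum.inl k) - m (Sum.inr k) : ℤ) : ℝ) * ω k : ℝ) : ℂ) = 0 := by
      push_cast
      rw [← h, Finset.mul_sum]
      refine Finset.sum_congr rfl fun k _ => ?_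
      simp only [rotationWeight, Sum.elim_inl, Sum.elim_inr]
      ring
    simpa [I_ne_zero] using hI
  have := hω _ hsum k
  omega

end Diagonalization

theorem map_actionPoly {f : ℕ} (k : Fin f) :
    map (algebraMap ℝ ℂ) (actionPoly k) = (2⁻¹ : ℂ) • (X (Sum.inl k) ^ 2 + X (Sum.inr k) ^ 2) := by
  simp [actionPoly, smul_eq_C_mul, mul_add]

theorem aeval_complexVar_monomial {f : ℕ} (m : Fin f ⊕ Fin f →₀ ℕ) (a : ℂ)
    (hm : ∀ k, m (Sum.inr k) = m (Sum.inl k)) :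
    aeval complexVar (monomial m a) = (a * 2 ^ ∑ k, m (Sum.inl k)) •
      map (algebraMap ℝ ℂ) (∏ k, actionPoly k ^ m (Sum.inl k)) := by
  rw [aeval_monomial, Finsupp.prod_fintype _ _ fun _ => pow_zero _, Fintype.prod_sum_type]
  simp only [hm, ← Finset.prod_mul_distrib, ← mul_pow, complexVar_inl_mul_complexVar_inr, map_prod,
    map_pow, map_actionPoly, smul_pow, Finset.prod_smul]
  rw [smul_smul, Finset.prod_pow_eq_pow_sum, mul_assoc, ← mul_pow,
    mul_inv_cancel₀ two_ne_zero, one_pow, mul_one, Algebra.smul_def]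

theorem mem_span_prod_actionPoly_of_rotation_eq_zero {f : ℕ} {ω : Fin f → ℝ}
    (hω : ∀ m : Fin f → ℤ, ∑ k, (m k : ℝ) * ω k = 0 → ∀ k, m k = 0)
    {Q : MvPolynomial (Fin f ⊕ Fin f) ℂ} (hQ : rotation (fun k => (ω k : ℂ)) Q = 0) :
    Q ∈ span ℂ (Set.range fun α : Fin f → ℕ => map (algebraMap ℝ ℂ) (∏ k, actionPoly k ^ α k)) := by
  have hG : weightedEuler (rotationWeight (fun k => (ω k : ℂ))) (aeval realVar Q) = 0 := by
    rw [← aeval_realVar_rotation, hQ, map_zero]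
  rw [← aeval_complexVar_aeval_realVar Q, (aeval realVar Q).as_sum, map_sum]
  refine sum_mem fun m hm => ?_
  rw [aeval_complexVar_monomial m _ (apply_inr_eq_apply_inl_of_weight_eq_zero hω
    (weight_eq_zero_of_weightedEuler_eq_zero hG hm))]
  exact smul_mem _ _ (subset_span ⟨_, rfl⟩)

theorem isHomogeneous_prod_actionPoly_pow {f : ℕ} (α : Fin f → ℕ) :
    (∏ k, actionPoly k ^ α k).IsHomogeneous (2 * ∑ k, α k) := by
  rw [Finset.mul_sum]
  refine IsHomogeneous.prod _ _ _ fun k _ => IsHomogeneous.pow ?_ _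
  exact ((isHomogeneous_X_pow (R := ℝ) (Sum.inl k) 2).add (isHomogeneous_X_pow _ 2)).C_mul _

end Oscillator

open Oscillator in
theorem nonresonant_normal_form_kernel_general
    (f : ℕ) (ω : Fin f → ℝ)
    (hω : ∀ m : Fin f → ℤ, (∑ k : Fin f, (m k : ℝ) * ω k) = 0 → ∀ k, m k = 0)
    (H₂ : MvPolynomial (Fin f ⊕ Fin f) ℝ)
    (hH₂ : H₂ = ∑ k : Fin f, MvPolynomial.C (ω k / 2) *
      ((MvPolynomial.X (Sum.inl k)) ^ 2 + (MvPolynomial.X (Sum.inr k)) ^ 2))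
    (n : ℕ) (P : MvPolynomial (Fin f ⊕ Fin f) ℝ)
    (hP : P.IsHomogeneous n)
    (hcomm : mvPB H₂ P = 0) :
    (Odd n → P = 0) ∧
    (Even n → P ∈ Submodule.span ℝ
      {m : MvPolynomial (Fin f ⊕ Fin f) ℝ | ∃ α : Fin f → ℕ,
        (∑ k : Fin f, α k = n / 2) ∧ m = ∏ k : Fin f, (actionPoly k) ^ (α k)}) := by
  have hQ : rotation (fun k => (ω k : ℂ)) (map (algebraMap ℝ ℂ) P) = 0 := by
    have h := congrArg (map (algebraMap ℝ ℂ)) hcomm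
    rwa [hH₂, mvPB_eq_rotation, map_rotation, map_zero] at h
  have hPspan := mem_span_image_of_isHomogeneous isHomogeneous_prod_actionPoly_pow hP
    (mem_span_of_map_mem_span_complex (mem_span_prod_actionPoly_of_rotation_eq_zero hω hQ))
  refine ⟨fun hn => ?_, fun _ => span_mono ?_ hPspan⟩
  · have hdeg : {α : Fin f → ℕ | 2 * ∑ k, α k = n} = ∅ :=
      Set.eq_empty_of_forall_notMem fun α hα => Nat.not_even_iff_odd.mpr hn ⟨_, hα ▸ two_mul _⟩
    simpa [hdeg] using hPspan
  · rintro _ ⟨α, hα, rfl⟩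
    rw [Set.mem_ofPred_eq] at hα
    exact ⟨α, by omega, rfl⟩

/-- If the frequencies `ω₁,…,ω_f` are rationally independent
and `P` is a homogeneous polynomial of degree `n` Poisson-commuting with
`H₂ = Σ_k (ω_k/2)(q_k² + p_k²)`, then `P = 0` if `n` is odd, while if `n` is
even `P` lies in the span of the monomials `I₁^{α₁} ⋯ I_f^{α_f}` with
`|α| = n/2`, where `I_k = (q_k² + p_k²)/2`. -/
theorem nonresonant_normal_form_kernel
    (f : ℕ) (hf : 1 ≤ f) (ω : Fin f → ℝ)
    (hω : ∀ m : Fin f → ℤ, (∑ k : Fin f, (m k : ℝ) * ω k) = 0 → ∀ k, m k = 0)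
    (H₂ : MvPolynomial (Fin f ⊕ Fin f) ℝ)
    (hH₂ : H₂ = ∑ k : Fin f, MvPolynomial.C (ω k / 2) *
      ((MvPolynomial.X (Sum.inl k)) ^ 2 + (MvPolynomial.X (Sum.inr k)) ^ 2))
    (n : ℕ) (P : MvPolynomial (Fin f ⊕ Fin f) ℝ)
    (hP : P.IsHomogeneous n)
    (hcomm : mvPB H₂ P = 0) :
    (Odd n → P = 0) ∧
    (Even n → P ∈ Submodule.span ℝ
      {m : MvPolynomial (Fin f ⊕ Fin f) ℝ | ∃ α : Fin f → ℕ,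
        (∑ k : Fin f, α k = n / 2) ∧ m = ∏ k : Fin f, (actionPoly k) ^ (α k)}) :=
  nonresonant_normal_form_kernel_general f ω hω H₂ hH₂ n P hP hcomm
end
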